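/- For K ≥ 2, let P⁽¹⁾ be an unextendible product basis of H = ℂ^{d₁} ⊗ ⋯ ⊗ ℂ^{d_N}, and for 2 ≤ i ≤ K let P⁽ⁱ⁾ be a complete orthonormal basis of H consisting of fully product vectors. Then P = {ψ ⊗ e_i : ψ ∈ P⁽ⁱ⁾, 1 ≤ i ≤ K} is an unextendible product basis of H ⊗ ℂ^K, with the same missing number as P⁽¹⁾. -/

import Mathlib

open scoped Classical

/-- The fully product vector of `ℂ^{d₁} ⊗ ⋯ ⊗ ℂ^{d_N}` (modelled as
`EuclideanSpace ℂ (Π i, Fin (d i))`) with local factors `φ i`. -/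
noncomputable def prodVec {N : ℕ} {d : Fin N → ℕ} (φ : ∀ i, Fin (d i) → ℂ) :
    EuclideanSpace ℂ (∀ i, Fin (d i)) :=
  WithLp.toLp 2 (fun x => ∏ i, φ i (x i))

/-- An unextendible product basis of `ℂ^{d₁} ⊗ ⋯ ⊗ ℂ^{d_N}`. -/
def IsUPB {N : ℕ} {d : Fin N → ℕ} (S : Finset (EuclideanSpace ℂ (∀ i, Fin (d i)))) : Prop :=
  (∀ ψ ∈ S, ∃ φ, ψ = prodVec φ) ∧
  (∀ ψ ∈ S, ∀ χ ∈ S, (inner ℂ ψ χ : ℂ) = if ψ = χ then 1 else 0) ∧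
  S.card < ∏ i, d i ∧
  ∀ φ : ∀ i, Fin (d i) → ℂ, prodVec φ ≠ 0 →
    ¬ (∀ ψ ∈ S, (inner ℂ ψ (prodVec φ) : ℂ) = 0)

/-- A complete orthonormal basis of `ℂ^{d₁} ⊗ ⋯ ⊗ ℂ^{d_N}` consisting of fully
product vectors. -/
def IsCompleteProductBasis {N : ℕ} {d : Fin N → ℕ}
    (S : Finset (EuclideanSpace ℂ (∀ i, Fin (d i)))) : Prop :=
  (∀ ψ ∈ S, ∃ φ, ψ = prodVec φ) ∧
  (∀ ψ ∈ S, ∀ χ ∈ S, (inner ℂ ψ χ : ℂ) = if ψ = χ then 1 else 0) ∧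
  S.card = ∏ i, d i

/-- The fully product vector of `(ℂ^{d₁} ⊗ ⋯ ⊗ ℂ^{d_N}) ⊗ ℂ^K`. -/
noncomputable def prodVecExt {N K : ℕ} {d : Fin N → ℕ}
    (φ : ∀ i, Fin (d i) → ℂ) (χ : Fin K → ℂ) :
    EuclideanSpace ℂ ((∀ i, Fin (d i)) × Fin K) :=
  WithLp.toLp 2 (fun p => (∏ i, φ i (p.1 i)) * χ p.2)

/-- An unextendible product basis of `(ℂ^{d₁} ⊗ ⋯ ⊗ ℂ^{d_N}) ⊗ ℂ^K`. -/
def IsUPBExt {N K : ℕ} {d : Fin N → ℕ}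
    (S : Finset (EuclideanSpace ℂ ((∀ i, Fin (d i)) × Fin K))) : Prop :=
  (∀ ψ ∈ S, ∃ φ χ, ψ = prodVecExt φ χ) ∧
  (∀ ψ ∈ S, ∀ χ ∈ S, (inner ℂ ψ χ : ℂ) = if ψ = χ then 1 else 0) ∧
  S.card < (∏ i, d i) * K ∧
  ∀ (φ : ∀ i, Fin (d i) → ℂ) (χ : Fin K → ℂ), prodVecExt φ χ ≠ 0 →
    ¬ (∀ ψ ∈ S, (inner ℂ ψ (prodVecExt φ χ) : ℂ) = 0)

/-- The map `ψ ↦ ψ ⊗ e_i` into `(ℂ^{d₁} ⊗ ⋯ ⊗ ℂ^{d_N}) ⊗ ℂ^K`. -/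
noncomputable def tensorBasisVec {N K : ℕ} {d : Fin N → ℕ} (i : Fin K)
    (ψ : EuclideanSpace ℂ (∀ i, Fin (d i))) :
    EuclideanSpace ℂ ((∀ i, Fin (d i)) × Fin K) :=
  WithLp.toLp 2 (fun p => ψ p.1 * (if p.2 = i then 1 else 0))

/-!
If `φ ⊗ χ` is orthogonal to every `ψ ⊗ e_i`, pick `j` with `χ j ≠ 0`: then `φ` is orthogonal to all
of `P j`, which is impossible for a nonzero `φ` since `P 0` is unextendible and every other `P j`
is a complete basis. Counting, `P` has `#(P 0) + (K - 1) ∏ dᵢ` elements, so the missing number is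
that of `P 0`.
-/

open Finset

lemma eq_zero_of_forall_inner_eq_zero_of_card_eq_finrank {𝕜 E : Type*} [RCLike 𝕜]
    [NormedAddCommGroup E] [InnerProductSpace 𝕜 E] [FiniteDimensional 𝕜 E] {S : Finset E}
    (hS : Orthonormal 𝕜 (Subtype.val : S → E)) (hcard : #S = Module.finrank 𝕜 E) {v : E}
    (hv : ∀ u ∈ S, (inner 𝕜 u v : 𝕜) = 0) : v = 0 :=
  InnerProductSpace.ext_inner_left_basis
    (basisOfLinearIndependentOfCardEqFinrank' _ hS.linearIndependent (by simpa using hcard))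
    fun u => by simp [hv u u.2]

def IsUnextendible {N : ℕ} {d : Fin N → ℕ} (S : Finset (EuclideanSpace ℂ (∀ i, Fin (d i)))) :
    Prop :=
  ∀ φ : ∀ i, Fin (d i) → ℂ, prodVec φ ≠ 0 → ¬ ∀ ψ ∈ S, (inner ℂ ψ (prodVec φ) : ℂ) = 0

lemma IsCompleteProductBasis.eq_zero_of_forall_inner_eq_zero {N : ℕ} {d : Fin N → ℕ}
    {S : Finset (EuclideanSpace ℂ (∀ i, Fin (d i)))} (hS : IsCompleteProductBasis S)
    {v : EuclideanSpace ℂ (∀ i, Fin (d i))} (hv : ∀ ψ ∈ S, (inner ℂ ψ v : ℂ) = 0) : v = 0 :=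
  eq_zero_of_forall_inner_eq_zero_of_card_eq_finrank
    (orthonormal_subtype_iff_ite.2 hS.2.1) (by simp [hS.2.2]) hv

lemma IsCompleteProductBasis.isUnextendible {N : ℕ} {d : Fin N → ℕ}
    {S : Finset (EuclideanSpace ℂ (∀ i, Fin (d i)))} (hS : IsCompleteProductBasis S) :
    IsUnextendible S :=
  fun _ hφ h => hφ (hS.eq_zero_of_forall_inner_eq_zero h)

section TensorBasisVec

variable {N K : ℕ} {d : Fin N → ℕ}

lemma tensorBasisVec_apply (i : Fin K) (ψ : EuclideanSpace ℂ (∀ i, Fin (d i)))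
    (p : (∀ i, Fin (d i)) × Fin K) :
    tensorBasisVec i ψ p = if p.2 = i then ψ p.1 else 0 := by
  simp [tensorBasisVec]

lemma tensorBasisVec_inj {i j : Fin K} {ψ χ : EuclideanSpace ℂ (∀ i, Fin (d i))} (hψ : ψ ≠ 0) :
    tensorBasisVec i ψ = tensorBasisVec j χ ↔ i = j ∧ ψ = χ := by
  refine ⟨fun h => ?_, by rintro ⟨rfl, rfl⟩; rfl⟩
  have hψχ : ∀ x, ψ x = if i = j then χ x else 0 := fun x => by
    simpa [tensorBasisVec_apply] using congr($h (x, i))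
  have hij : i = j := by
    by_contra hij
    exact hψ (by ext x; simpa [hij] using hψχ x)
  exact ⟨hij, by ext x; simpa [hij] using hψχ x⟩

lemma inner_tensorBasisVec_tensorBasisVec (i j : Fin K) (ψ χ : EuclideanSpace ℂ (∀ i, Fin (d i))) :
    (inner ℂ (tensorBasisVec i ψ) (tensorBasisVec j χ) : ℂ)
      = (if i = j then 1 else 0) * inner ℂ ψ χ := by
  simp only [PiLp.inner_apply, tensorBasisVec_apply, RCLike.inner_apply,
    Fintype.sum_prod_type_right]
  split_ifs with h
  · subst h; simp
  · simp [sum_ite_eq', Ne.symm h]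

lemma tensorBasisVec_prodVec (i : Fin K) (φ : ∀ i, Fin (d i) → ℂ) :
    tensorBasisVec i (prodVec φ) = prodVecExt φ (Pi.single i 1) := by
  ext p
  simp [tensorBasisVec_apply, prodVecExt, prodVec, Pi.single_apply]

lemma inner_tensorBasisVec_prodVecExt (i : Fin K) (ψ : EuclideanSpace ℂ (∀ i, Fin (d i)))
    (φ : ∀ i, Fin (d i) → ℂ) (χ : Fin K → ℂ) :
    (inner ℂ (tensorBasisVec i ψ) (prodVecExt φ χ) : ℂ) = χ i * inner ℂ ψ (prodVec φ) := by
  simp only [PiLp.inner_apply, tensorBasisVec_apply, prodVecExt, prodVec, RCLike.inner_apply,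
    Fintype.sum_prod_type_right]
  rw [sum_comm]
  simp [apply_ite (starRingEnd ℂ), mul_sum, mul_comm, mul_left_comm]

lemma prodVecExt_eq_zero_iff (φ : ∀ i, Fin (d i) → ℂ) (χ : Fin K → ℂ) :
    prodVecExt φ χ = 0 ↔ prodVec φ = 0 ∨ χ = 0 := by
  constructor
  · intro h
    by_contra! hne
    obtain ⟨⟨x, hx⟩, ⟨k, hk⟩⟩ : (∃ x, prodVec φ x ≠ 0) ∧ ∃ k, χ k ≠ 0 := by
      refine ⟨?_, Function.ne_iff.1 hne.2⟩
      by_contra! h0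
      exact hne.1 (by ext x; exact h0 x)
    exact mul_ne_zero hx hk congr($h (x, k))
  · rintro (h | rfl) <;> ext p
    · show prodVec φ p.1 * χ p.2 = 0
      simp [h]
    · simp [prodVecExt]

end TensorBasisVec

section TensorBasisUnion

variable {N K : ℕ} {d : Fin N → ℕ}

noncomputable def tensorBasisUnion (P : Fin K → Finset (EuclideanSpace ℂ (∀ i, Fin (d i)))) :
    Finset (EuclideanSpace ℂ ((∀ i, Fin (d i)) × Fin K)) :=
  univ.biUnion fun i => (P i).image (tensorBasisVec i)

variable {P : Fin K → Finset (EuclideanSpace ℂ (∀ i, Fin (d i)))}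

lemma card_tensorBasisUnion (hP : ∀ i, 0 ∉ P i) :
    #(tensorBasisUnion P) = ∑ i, #(P i) := by
  rw [tensorBasisUnion, card_biUnion]
  · refine sum_congr rfl fun i _ => card_image_of_injOn fun ψ hψ χ _ h => ?_
    exact ((tensorBasisVec_inj (ne_of_mem_of_not_mem hψ (hP i))).1 h).2
  · intro i _ j _ hij
    simp only [Function.onFun, disjoint_left, mem_image, not_exists, not_and]
    rintro _ ⟨ψ, hψ, rfl⟩ χ _ h
    exact hij ((tensorBasisVec_inj (ne_of_mem_of_not_mem hψ (hP i))).1 h.symm).1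

lemma exists_eq_prodVecExt_of_mem_tensorBasisUnion (hP : ∀ i, ∀ ψ ∈ P i, ∃ φ, ψ = prodVec φ) :
    ∀ u ∈ tensorBasisUnion P, ∃ φ χ, u = prodVecExt φ χ := by
  simp only [tensorBasisUnion, mem_biUnion, mem_univ, true_and, mem_image]
  rintro _ ⟨i, ψ, hψ, rfl⟩
  obtain ⟨φ, rfl⟩ := hP i ψ hψ
  exact ⟨φ, _, tensorBasisVec_prodVec i φ⟩

lemma inner_tensorBasisUnion
    (hP : ∀ i, ∀ ψ ∈ P i, ∀ χ ∈ P i, (inner ℂ ψ χ : ℂ) = if ψ = χ then 1 else 0) :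
    ∀ u ∈ tensorBasisUnion P, ∀ v ∈ tensorBasisUnion P,
      (inner ℂ u v : ℂ) = if u = v then 1 else 0 := by
  simp only [tensorBasisUnion, mem_biUnion, mem_univ, true_and, mem_image]
  rintro _ ⟨i, ψ, hψ, rfl⟩ _ ⟨j, χ, hχ, rfl⟩
  have hψ0 : ψ ≠ 0 := fun h => by simpa [h] using hP i ψ hψ ψ hψ
  simp only [inner_tensorBasisVec_tensorBasisVec, tensorBasisVec_inj hψ0]
  by_cases hij : i = j
  · subst hij
    simp [hP i ψ hψ χ hχ]
  · simp [hij]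

lemma not_forall_inner_tensorBasisUnion_eq_zero (hP : ∀ i, IsUnextendible (P i))
    (φ : ∀ i, Fin (d i) → ℂ) (χ : Fin K → ℂ) (hφχ : prodVecExt φ χ ≠ 0) :
    ¬ ∀ u ∈ tensorBasisUnion P, (inner ℂ u (prodVecExt φ χ) : ℂ) = 0 := by
  intro h
  obtain ⟨hφ, hχ⟩ := not_or.1 ((prodVecExt_eq_zero_iff φ χ).not.1 hφχ)
  obtain ⟨j, hj⟩ := Function.ne_iff.1 hχ
  refine hP j φ hφ fun ψ hψ => ?_
  have := h _ (mem_biUnion.2 ⟨j, mem_univ j, mem_image_of_mem _ hψ⟩)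
  rw [inner_tensorBasisVec_prodVecExt] at this
  exact (mul_eq_zero.1 this).resolve_left hj

end TensorBasisUnion

/-- For `K ≥ 2`, if `P 0` is a UPB of `H = ℂ^{d₁} ⊗ ⋯ ⊗ ℂ^{d_N}` and for each
`i ≠ 0` the set `P i` is a complete orthonormal product basis of `H`, then
`{ψ ⊗ e_i : ψ ∈ P i}` is a UPB of `H ⊗ ℂ^K` with the same missing number as
`P 0`. -/
theorem upb_of_upb_and_complete_bases {N K : ℕ} {d : Fin N → ℕ} (hK : 2 ≤ K)
    (P : Fin K → Finset (EuclideanSpace ℂ (∀ i, Fin (d i))))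
    (h0 : IsUPB (P ⟨0, by omega⟩))
    (hrest : ∀ i : Fin K, i ≠ ⟨0, by omega⟩ → IsCompleteProductBasis (P i)) :
    IsUPBExt (Finset.univ.biUnion fun i : Fin K => (P i).image (tensorBasisVec i)) ∧
    (∏ i, d i) * K - (Finset.univ.biUnion fun i : Fin K =>
        (P i).image (tensorBasisVec i)).card = (∏ i, d i) - (P ⟨0, by omega⟩).card := by
  set z : Fin K := ⟨0, by omega⟩
  show IsUPBExt (tensorBasisUnion P) ∧ (∏ i, d i) * K - #(tensorBasisUnion P) = _
  have hP : ∀ i, ((∀ ψ ∈ P i, ∃ φ, ψ = prodVec φ) ∧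
      ∀ ψ ∈ P i, ∀ χ ∈ P i, (inner ℂ ψ χ : ℂ) = if ψ = χ then 1 else 0) ∧
      IsUnextendible (P i) := by
    intro i
    by_cases hi : i = z
    · subst hi
      exact ⟨⟨h0.1, h0.2.1⟩, h0.2.2.2⟩
    · exact ⟨⟨(hrest i hi).1, (hrest i hi).2.1⟩, (hrest i hi).isUnextendible⟩
  have hP0 : ∀ i, 0 ∉ P i := fun i h => by simpa using (hP i).1.2 0 h 0 h
  have hz := h0.2.2.1
  have hcard : #(tensorBasisUnion P) + (∏ i, d i - #(P z)) = (∏ i, d i) * K :=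
    calc #(tensorBasisUnion P) + (∏ i, d i - #(P z))
        = ∑ i ∈ univ.erase z, #(P i) + (#(P z) + (∏ i, d i - #(P z))) := by
          rw [card_tensorBasisUnion hP0, ← sum_erase_add _ _ (mem_univ z), add_assoc]
      _ = ∑ i ∈ univ.erase z, ∏ i, d i + ∏ i, d i := by
          rw [Nat.add_sub_cancel' hz.le,
            sum_congr rfl fun i hi => (hrest i (mem_erase.1 hi).1).2.2]
      _ = (∏ i, d i) * K := by
          rw [sum_erase_add _ _ (mem_univ z), sum_const, card_univ, Fintype.card_fin,
            smul_eq_mul, mul_comm]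
  refine ⟨⟨exists_eq_prodVecExt_of_mem_tensorBasisUnion fun i => (hP i).1.1,
    inner_tensorBasisUnion fun i => (hP i).1.2, by omega,
    not_forall_inner_tensorBasisUnion_eq_zero fun i => (hP i).2⟩, by omega⟩
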